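/- Let G be a graph on [n], z ∈ ℕ, and π = π_z(G) the encoding permutation. For any vertices u, v ∈ [n], there is at most one index i ∈ [p_M(u), p_R(u)−1] with π(i) ∈ [q_M(v), q_M(v)+deg⁻(v)−1]; moreover such an index exists if and only if u < v and {u,v} ∈ E(G). -/

import Mathlib

open scoped Classical

noncomputable section

/-- Number of right-neighbours of `v` (neighbours `u` with `v < u ≤ n`). -/
def degPlus (n : ℕ) (E : ℕ → ℕ → Prop) (v : ℕ) : ℕ :=
  ((Finset.Icc (v + 1) n).filter (fun u => E v u)).card

/-- Number of left-neighbours of `v` (neighbours `u` with `1 ≤ u < v`). -/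
def degMinus (n : ℕ) (E : ℕ → ℕ → Prop) (v : ℕ) : ℕ :=
  ((Finset.Icc 1 (v - 1)).filter (fun u => E v u)).card

/-- The number of edges of the graph with vertex set `[1, n]` and adjacency `E`. -/
def edgeCount (n : ℕ) (E : ℕ → ℕ → Prop) : ℕ :=
  (((Finset.Icc 1 n) ×ˢ (Finset.Icc 1 n)).filter (fun p => p.1 < p.2 ∧ E p.1 p.2)).card

/-- Starting position of the left separating run of `v`. -/
def pL (n z : ℕ) (E : ℕ → ℕ → Prop) (v : ℕ) : ℕ :=
  1 + ∑ w ∈ Finset.Ico 1 v, (2 * z + degPlus n E w)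

/-- Starting position of the encoding entries of `v`. -/
def pM (n z : ℕ) (E : ℕ → ℕ → Prop) (v : ℕ) : ℕ := pL n z E v + z

/-- Starting position of the right separating run of `v`. -/
def pR (n z : ℕ) (E : ℕ → ℕ → Prop) (v : ℕ) : ℕ := pM n z E v + degPlus n E v

/-- Starting (largest) value of the right separating run of `v`. -/
def qR (n z : ℕ) (E : ℕ → ℕ → Prop) (v : ℕ) : ℕ :=
  z + ∑ w ∈ Finset.Ico 1 v, (2 * z + degMinus n E w)

/-- Least value reserved for the encoding entries pointing to `v`. -/
def qM (n z : ℕ) (E : ℕ → ℕ → Prop) (v : ℕ) : ℕ := qR n z E v + 1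

/-- Starting (largest) value of the left separating run of `v`. -/
def qL (n z : ℕ) (E : ℕ → ℕ → Prop) (v : ℕ) : ℕ := qR n z E v + z + degMinus n E v

/-- `ℓ(v, u) = |{w < v : {w, u} ∈ E}|`. -/
def ellE (E : ℕ → ℕ → Prop) (v u : ℕ) : ℕ :=
  ((Finset.Ico 1 v).filter (fun w => E w u)).card

/-- The sorted list of right-neighbours of `v`. -/
def nbrList (n : ℕ) (E : ℕ → ℕ → Prop) (v : ℕ) : List ℕ :=
  Finset.sort ((Finset.Icc (v + 1) n).filter (fun u => E v u)) (· ≤ ·)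

/-- The encoding permutation `π_z(G)` of the paper, as a function on positions
(acting on `[1, 2zn + |E(G)|]`): for each vertex `v` (in order) it consists of a
decreasing run of length `z` starting with value `qL v`, then one encoding entry
`qM u + ℓ(v, u)` for each right-neighbour `u` of `v` in increasing order, then a
decreasing run of length `z` starting with value `qR v`. -/
def enc (n z : ℕ) (E : ℕ → ℕ → Prop) (i : ℕ) : ℕ :=
  if h1 : ∃ v, v ∈ Finset.Icc 1 n ∧ pL n z E v ≤ i ∧ i < pM n z E v then
    qL n z E h1.choose - (i - pL n z E h1.choose)
  else if h2 : ∃ v, v ∈ Finset.Icc 1 n ∧ pR n z E v ≤ i ∧ i < pR n z E v + z then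
    qR n z E h2.choose - (i - pR n z E h2.choose)
  else if h3 : ∃ v, v ∈ Finset.Icc 1 n ∧ pM n z E v ≤ i ∧ i < pR n z E v then
    (fun v => (fun u => qM n z E u + ellE E v u)
      ((nbrList n E v).getD (i - pM n z E v) 0)) h3.choose
  else 0

/-- `i` lies in the left or right separating run of the vertex `v`. -/
def inRunOf (n z : ℕ) (E : ℕ → ℕ → Prop) (v i : ℕ) : Prop :=
  (pL n z E v ≤ i ∧ i < pL n z E v + z) ∨ (pR n z E v ≤ i ∧ i < pR n z E v + z)

/-- `i` lies in some separating run. -/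
def inSepRun (n z : ℕ) (E : ℕ → ℕ → Prop) (i : ℕ) : Prop :=
  ∃ v, v ∈ Finset.Icc 1 n ∧ inRunOf n z E v i

/-- `σ`, a bijection of `[1, l]`, is a pattern of `π`, a bijection of `[1, m]`:
there is a strictly increasing `φ : [1, l] → [1, m]` with
`σ x < σ y ↔ π (φ x) < π (φ y)`. -/
def IsPatternOn (σ : ℕ → ℕ) (l : ℕ) (π : ℕ → ℕ) (m : ℕ) : Prop :=
  ∃ φ : ℕ → ℕ, Set.MapsTo φ (Set.Icc 1 l) (Set.Icc 1 m) ∧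
    StrictMonoOn φ (Set.Icc 1 l) ∧
    ∀ x ∈ Set.Icc 1 l, ∀ y ∈ Set.Icc 1 l, (σ x < σ y ↔ π (φ x) < π (φ y))

end

/-!
The encoding entries of `u` are, for its right-neighbours `w` in increasing order, the values
`qM w + ℓ(u, w)`. Since every left-neighbour of `w` below `u` is also a left-neighbour of `w`
distinct from `u`, `ℓ(u, w) < deg⁻ w`, so this value lies in the window
`[qM w, qM w + deg⁻ w)` reserved for `w`; the windows of distinct vertices are disjoint
because `qM` grows by at least `deg⁻ a` from `a` to `a + 1`. Hence an encoding entry of `u`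
lands in the window of `v` exactly when it is the entry of the right-neighbour `v`, and the
neighbour list has no repetitions.
-/

open Finset

section EncodingPermutation

variable {n z : ℕ} {E : ℕ → ℕ → Prop}

lemma pL_monotone : Monotone (pL n z E) := fun _ _ h =>
  Nat.add_le_add_left (sum_le_sum_of_subset (Ico_subset_Ico_right h)) 1

lemma pL_succ {v : ℕ} (hv : 1 ≤ v) : pL n z E (v + 1) = pR n z E v + z := by
  simp only [pR, pM, pL, sum_Ico_succ_top hv]
  ring

lemma pR_add_le_pL {a b : ℕ} (ha : 1 ≤ a) (h : a < b) : pR n z E a + z ≤ pL n z E b :=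
  pL_succ ha ▸ pL_monotone h

lemma qR_monotone : Monotone (qR n z E) := fun _ _ h =>
  Nat.add_le_add_left (sum_le_sum_of_subset (Ico_subset_Ico_right h)) z

lemma qM_add_degMinus_le {a b : ℕ} (ha : 1 ≤ a) (h : a < b) :
    qM n z E a + degMinus n E a ≤ qM n z E b := by
  have hstep : qR n z E (a + 1) = qR n z E a + 2 * z + degMinus n E a := by
    simp only [qR, sum_Ico_succ_top ha]
    ring
  have : qR n z E (a + 1) ≤ qR n z E b := qR_monotone h
  simp only [qM]
  omega

lemma eq_of_qM_add_mem_window {v w e : ℕ} (hv : 1 ≤ v) (hw : 1 ≤ w)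
    (he : e < degMinus n E w)
    (h : qM n z E w + e ∈ Ico (qM n z E v) (qM n z E v + degMinus n E v)) : w = v := by
  rw [mem_Ico] at h
  rcases lt_trichotomy w v with hwv | hwv | hwv
  · have := qM_add_degMinus_le (n := n) (z := z) (E := E) hw hwv
    omega
  · exact hwv
  · have := qM_add_degMinus_le (n := n) (z := z) (E := E) hv hwv
    omega

lemma Icc_qM_window_eq_Ico (v : ℕ) :
    Icc (qM n z E v) (qM n z E v + degMinus n E v - 1) =
      Ico (qM n z E v) (qM n z E v + degMinus n E v) := by
  ext x
  simp only [mem_Icc, mem_Ico, qM]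
  omega

lemma mem_middle_iff {u i : ℕ} :
    i ∈ Icc (pM n z E u) (pR n z E u - 1) ↔ ∃ k < degPlus n E u, i = pM n z E u + k := by
  have : 1 ≤ pL n z E u := Nat.le_add_right 1 _
  simp only [mem_Icc, pR, pM]
  constructor
  · rintro ⟨h₁, h₂⟩
    exact ⟨i - (pL n z E u + z), by omega, by omega⟩
  · rintro ⟨k, hk, rfl⟩
    omega

lemma length_nbrList (v : ℕ) : (nbrList n E v).length = degPlus n E v :=
  length_sort _

lemma nodup_nbrList (v : ℕ) : (nbrList n E v).Nodup :=
  sort_nodup _ _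

lemma mem_nbrList {v w : ℕ} : w ∈ nbrList n E v ↔ (v < w ∧ w ≤ n) ∧ E v w := by
  rw [nbrList, mem_sort, mem_filter, mem_Icc, Nat.succ_le_iff]

lemma eq_of_pM_add_mem_block {u w k : ℕ} (hu : 1 ≤ u) (hw : 1 ≤ w) (hk : k < degPlus n E u)
    (hl : pL n z E w ≤ pM n z E u + k) (hr : pM n z E u + k < pR n z E w + z) : w = u := by
  rcases lt_trichotomy w u with h | h | h
  · have := pR_add_le_pL (n := n) (z := z) (E := E) hw h
    simp only [pM] at *
    omega
  · exact h
  · have := pR_add_le_pL (n := n) (z := z) (E := E) hu h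
    simp only [pR, pM] at *
    omega

lemma enc_pM_add {u k : ℕ} (hu : u ∈ Icc 1 n) (hk : k < (nbrList n E u).length) :
    enc n z E (pM n z E u + k) =
      qM n z E (nbrList n E u)[k] + ellE E u (nbrList n E u)[k] := by
  have hu1 : 1 ≤ u := (mem_Icc.1 hu).1
  rw [length_nbrList] at hk
  have block_eq {w : ℕ} (hw : w ∈ Icc 1 n) (hl : pL n z E w ≤ pM n z E u + k)
      (hr : pM n z E u + k < pR n z E w + z) : w = u :=
    eq_of_pM_add_mem_block hu1 (mem_Icc.1 hw).1 hk hl hr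
  have hL : ¬ ∃ w ∈ Icc 1 n, pL n z E w ≤ pM n z E u + k ∧ pM n z E u + k < pM n z E w := by
    rintro ⟨w, hw, hl, hr⟩
    obtain rfl := block_eq hw hl (by simp only [pR] at *; omega)
    omega
  have hR : ¬ ∃ w ∈ Icc 1 n, pR n z E w ≤ pM n z E u + k ∧ pM n z E u + k < pR n z E w + z := by
    rintro ⟨w, hw, hl, hr⟩
    obtain rfl := block_eq hw (by simp only [pR, pM] at *; omega) hr
    simp only [pR] at hl
    omega
  have hM : ∃ w ∈ Icc 1 n, pM n z E w ≤ pM n z E u + k ∧ pM n z E u + k < pR n z E w :=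
    ⟨u, hu, by omega, by simp only [pR]; omega⟩
  have hchoose : hM.choose = u := by
    obtain ⟨hw, hl, hr⟩ := hM.choose_spec
    exact block_eq hw (by simp only [pM] at *; omega) (by omega)
  rw [enc, dif_neg hL, dif_neg hR, dif_pos hM]
  simp only [hchoose, Nat.add_sub_cancel_left, List.getD_eq_getElem _ _ (by rwa [length_nbrList])]

lemma ellE_lt_degMinus (hsym : ∀ a b, E a b → E b a) {u w : ℕ} (hu : 1 ≤ u) (huw : u < w)
    (he : E u w) : ellE E u w < degMinus n E w := by
  refine card_lt_card ((ssubset_iff_of_subset ?_).2 ⟨u, ?_, ?_⟩)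
  · intro x hx
    simp only [mem_filter, mem_Ico, mem_Icc] at hx ⊢
    exact ⟨⟨hx.1.1, by omega⟩, hsym x w hx.2⟩
  · simp only [mem_filter, mem_Icc]
    exact ⟨⟨hu, by omega⟩, hsym u w he⟩
  · simp

lemma enc_pM_add_mem_window_iff (hsym : ∀ a b, E a b → E b a) {u v k : ℕ}
    (hu : u ∈ Icc 1 n) (hv : 1 ≤ v) (hk : k < (nbrList n E u).length) :
    enc n z E (pM n z E u + k) ∈ Ico (qM n z E v) (qM n z E v + degMinus n E v) ↔
      (nbrList n E u)[k] = v := by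
  obtain ⟨⟨huw, -⟩, he⟩ := mem_nbrList.1 (List.getElem_mem hk)
  have hell := ellE_lt_degMinus (n := n) hsym (mem_Icc.1 hu).1 huw he
  rw [enc_pM_add hu hk]
  constructor
  · exact eq_of_qM_add_mem_window hv (by omega) hell
  · intro h
    rw [h] at hell ⊢
    simp only [mem_Ico]
    omega

end EncodingPermutation

theorem enc_unique_encoding_entry_general (n z : ℕ) (E : ℕ → ℕ → Prop)
    (hsym : ∀ u v, E u v → E v u)
    (u v : ℕ) (hu : u ∈ Finset.Icc 1 n) (hv : v ∈ Finset.Icc 1 n) :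
    (∀ i ∈ Finset.Icc (pM n z E u) (pR n z E u - 1),
      ∀ j ∈ Finset.Icc (pM n z E u) (pR n z E u - 1),
        enc n z E i ∈ Finset.Icc (qM n z E v) (qM n z E v + degMinus n E v - 1) →
        enc n z E j ∈ Finset.Icc (qM n z E v) (qM n z E v + degMinus n E v - 1) →
        i = j) ∧
    ((∃ i ∈ Finset.Icc (pM n z E u) (pR n z E u - 1),
        enc n z E i ∈ Finset.Icc (qM n z E v) (qM n z E v + degMinus n E v - 1)) ↔
      (u < v ∧ E u v)) := by
  obtain ⟨hv1, hvn⟩ := mem_Icc.1 hv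
  have window_iff {k : ℕ} (hk : k < (nbrList n E u).length) :=
    enc_pM_add_mem_window_iff (z := z) hsym hu hv1 hk
  simp only [Icc_qM_window_eq_Ico, mem_middle_iff, ← length_nbrList]
  refine ⟨?_, ⟨?_, ?_⟩⟩
  · rintro _ ⟨k, hk, rfl⟩ _ ⟨l, hl, rfl⟩ hkv hlv
    rw [window_iff hk] at hkv
    rw [window_iff hl] at hlv
    rw [(nodup_nbrList u).getElem_inj_iff.1 (hkv.trans hlv.symm)]
  · rintro ⟨_, ⟨k, hk, rfl⟩, hkv⟩
    obtain ⟨⟨huv, -⟩, he⟩ := mem_nbrList.1 ((window_iff hk).1 hkv ▸ List.getElem_mem hk)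
    exact ⟨huv, he⟩
  · rintro ⟨huv, he⟩
    obtain ⟨k, hk, hkv⟩ := List.mem_iff_getElem.1 (mem_nbrList.2 ⟨⟨huv, hvn⟩, he⟩)
    exact ⟨_, ⟨k, hk, rfl⟩, (window_iff hk).2 hkv⟩

/-- Observation 2 of the paper: for vertices `u, v`, there is at most one index in
`[pM u, pR u − 1]` whose `enc`-value lies in `[qM v, qM v + deg⁻ v − 1]`, and such an
index exists iff `u < v` and `{u, v}` is an edge. -/
theorem enc_unique_encoding_entry (n z : ℕ) (E : ℕ → ℕ → Prop)
    (hsym : ∀ u v, E u v → E v u)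
    (hrange : ∀ u v, E u v → u ∈ Finset.Icc 1 n ∧ v ∈ Finset.Icc 1 n)
    (hirr : ∀ v, ¬ E v v)
    (u v : ℕ) (hu : u ∈ Finset.Icc 1 n) (hv : v ∈ Finset.Icc 1 n) :
    (∀ i ∈ Finset.Icc (pM n z E u) (pR n z E u - 1),
      ∀ j ∈ Finset.Icc (pM n z E u) (pR n z E u - 1),
        enc n z E i ∈ Finset.Icc (qM n z E v) (qM n z E v + degMinus n E v - 1) →
        enc n z E j ∈ Finset.Icc (qM n z E v) (qM n z E v + degMinus n E v - 1) →
        i = j) ∧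
    ((∃ i ∈ Finset.Icc (pM n z E u) (pR n z E u - 1),
        enc n z E i ∈ Finset.Icc (qM n z E v) (qM n z E v + degMinus n E v - 1)) ↔
      (u < v ∧ E u v)) :=
  enc_unique_encoding_entry_general n z E hsym u v hu hv
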